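/- Let d ≥ 2, let K be a number field, and let S be the set of primes of K dividing (2d−2)!, together with all archimedean places. Then GR_d^1[2d](K,S)/PGL_2(R_S) is infinite: the triples (f_a, X, X), where f_a(x) = a·x(x−1)⋯(x−d+1)/((x+1)⋯(x+d−1)) for a ∈ R_S^× and X = {0,1,…,d−1} ∪ {−1,…,−(d−1)} ∪ {∞}, lie in GR_d^1[2d](K,S) and represent infinitely many distinct PGL_2(R_S)-conjugacy classes. -/

import Mathlib

open Polynomial
open scoped Classical

noncomputable section

/-- The projective line over `L`: `L` together with a point at infinity (`none`). -/
abbrev ProjLine (L : Type*) := Option L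

namespace ProjLine

variable {L : Type*} [Field L]

/-- Value of the rational map `p/q` at a finite point `x`. -/
def evalAt (p q : L[X]) (x : L) : ProjLine L :=
  if q.eval x = 0 then none else some (p.eval x / q.eval x)

/-- Value at a point of the projective line of the degree-`d` morphism whose
dehomogenized description is the pair `(p, q)` (i.e. the morphism
`[Y^d·p(X/Y) : Y^d·q(X/Y)]` in homogeneous coordinates). -/
def eval (d : ℕ) (p q : L[X]) : ProjLine L → ProjLine L
  | some x => evalAt p q x
  | none => evalAt (p.reflect d) (q.reflect d) 0

/-- Ramification index of `p/q` at a finite point `x`. -/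
def ramAt (p q : L[X]) (x : L) : ℕ :=
  if q.eval x = 0 then rootMultiplicity x q
  else rootMultiplicity x (C (q.eval x) * p - C (p.eval x) * q)

/-- Ramification index at a point of the projective line of the degree-`d` morphism
with dehomogenized description `(p, q)`. -/
def ram (d : ℕ) (p q : L[X]) : ProjLine L → ℕ
  | some x => ramAt p q x
  | none => ramAt (p.reflect d) (q.reflect d) 0

/-- The Möbius transformation of the projective line attached to a 2×2 matrix. -/
def mobius (M : Matrix (Fin 2) (Fin 2) L) : ProjLine L → ProjLine L
  | some x => if M 1 0 * x + M 1 1 = 0 then none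
      else some ((M 0 0 * x + M 0 1) / (M 1 0 * x + M 1 1))
  | none => if M 1 0 = 0 then none else some (M 0 0 / M 1 0)

/-- The Sylvester matrix of the binary forms of degrees `d` and `e` whose
dehomogenizations are `p` and `q`. -/
def sylvester (d e : ℕ) (p q : L[X]) : Matrix (Fin (e + d)) (Fin (e + d)) L :=
  Matrix.of fun i j =>
    if (i : ℕ) < e then
      (if (i : ℕ) ≤ (j : ℕ) ∧ (j : ℕ) ≤ (i : ℕ) + d then p.coeff (d + (i : ℕ) - (j : ℕ)) else 0)
    else
      (if (i : ℕ) - e ≤ (j : ℕ) ∧ (j : ℕ) ≤ ((i : ℕ) - e) + e then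
        q.coeff (e + ((i : ℕ) - e) - (j : ℕ)) else 0)

/-- The resultant of the binary forms of degrees `d` and `e` whose dehomogenizations
are `p` and `q`, as a Sylvester determinant. -/
def resultant (d e : ℕ) (p q : L[X]) : L := (sylvester d e p q).det

/-- Reduction of a point of the projective line over `L` modulo (the maximal ideal of)
a valuation subring `O` of `L`. -/
def red (O : ValuationSubring L) : ProjLine L → ProjLine (IsLocalRing.ResidueField ↥O)
  | some x => if h : x ∈ O then some (IsLocalRing.residue ↥O ⟨x, h⟩) else none
  | none => none

end ProjLine

/-- A pair of polynomials `(p, q)` over a field is the (dehomogenized) description of a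
morphism `P¹ → P¹` of degree `d`:  `p` and `q` are coprime, have degree at most `d`,
and at least one of them has degree exactly `d`. -/
def IsRatMapOfDeg {F : Type*} [Field F] (d : ℕ) (p q : F[X]) : Prop :=
  IsCoprime p q ∧ p.natDegree ≤ d ∧ q.natDegree ≤ d ∧ (p.natDegree = d ∨ q.natDegree = d)

open IsDedekindDomain NumberField

/-- The finite places of a number field `K`, i.e. the nonzero primes of its ring of
integers.  (Archimedean places impose no good-reduction conditions, so a finite set `S`
of places containing all archimedean ones is modelled by its finite set of
nonarchimedean members.) -/
abbrev NFPlace (K : Type*) [Field K] [NumberField K] := HeightOneSpectrum (𝓞 K)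

variable {K : Type*} [Field K] [NumberField K]

/-- `x ∈ R_S`: `x` is integral at every place outside `S`. -/
def SInteger (S : Set (NFPlace K)) (x : K) : Prop :=
  ∀ v : NFPlace K, v ∉ S → v.valuation K x ≤ 1

/-- `x ∈ R_S^×`: `x` is a unit at every place outside `S`. -/
def SUnit (S : Set (NFPlace K)) (x : K) : Prop :=
  x ≠ 0 ∧ ∀ v : NFPlace K, v ∉ S → v.valuation K x = 1

section Ext

variable {Kb : Type*} [Field Kb] [Algebra K Kb]

/-- A valuation subring `O` of an extension `Kb` of `K` lies over the place `v` of `K`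
if its restriction to `K` is exactly the valuation ring of `v`. -/
def LiesOver (O : ValuationSubring Kb) (v : NFPlace K) : Prop :=
  ∀ x : K, algebraMap K Kb x ∈ O ↔ v.valuation K x ≤ 1

/-- A set `X` of points of the projective line over an extension of `K` has good
reduction outside `S` if for every place `v ∉ S` and every extension of `v`
(i.e. every valuation subring lying over `v`), reduction is injective on `X`. -/
def GoodRedPoints (S : Set (NFPlace K)) (X : Set (ProjLine Kb)) : Prop :=
  ∀ v : NFPlace K, v ∉ S → ∀ O : ValuationSubring Kb, LiesOver O v →
    Set.InjOn (ProjLine.red O) X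

/-- `X` is stable under the action of `Gal(Kb/K)`. -/
def GalInvariant (X : Set (ProjLine Kb)) : Prop :=
  ∀ σ : Kb ≃ₐ[K] Kb, ∀ P ∈ X, Option.map (⇑σ) P ∈ X

end Ext

variable (K) in
/-- A triple `(f, Y, X)` consisting of (the dehomogenized description of) a rational
map and two sets of points of `P¹(K̄)`. -/
structure DynTriple where
  p : K[X]
  q : K[X]
  Y : Set (ProjLine (AlgebraicClosure K))
  X : Set (ProjLine (AlgebraicClosure K))

/-- Base change of a polynomial over `K` to the algebraic closure. -/
def polyBar (p : K[X]) : (AlgebraicClosure K)[X] := p.map (algebraMap K (AlgebraicClosure K))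

/-- Base change of a matrix over `K` to the algebraic closure. -/
def matBar (M : Matrix (Fin 2) (Fin 2) K) : Matrix (Fin 2) (Fin 2) (AlgebraicClosure K) :=
  M.map (algebraMap K (AlgebraicClosure K))

/-- `f` (given by the pair `(p,q)` of degree `d`) has simple good reduction outside `S`:
some `PGL₂(K)`-conjugate of `f` is given by a pair of `S`-integral polynomials whose
resultant is an `S`-unit. -/
def SimpleGoodRed (S : Set (NFPlace K)) (d : ℕ) (p q : K[X]) : Prop :=
  ∃ (M : Matrix (Fin 2) (Fin 2) K) (p' q' : K[X]),
    M.det ≠ 0 ∧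
    IsRatMapOfDeg d p' q' ∧
    (∀ n, SInteger S (p'.coeff n)) ∧ (∀ n, SInteger S (q'.coeff n)) ∧
    SUnit S (ProjLine.resultant d d p' q') ∧
    ∀ P : ProjLine K,
      ProjLine.mobius M (ProjLine.eval d p' q' P)
        = ProjLine.eval d p q (ProjLine.mobius M P)

/-- Membership in `𝐺𝑅̃¹_d[n](K,S)`:  `(f, Y, X)` with `f` of degree `d`, `X = Y ∪ f(Y)`
finite and Galois invariant, total ramification weight `n` on `Y`, and `X` of good
reduction outside `S`.  (No good-reduction requirement on `f` itself.) -/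
def MemGRtilde (S : Set (NFPlace K)) (d n : ℕ) (t : DynTriple K) : Prop :=
  IsRatMapOfDeg d t.p t.q ∧
  t.Y.Finite ∧
  t.X = t.Y ∪ (ProjLine.eval d (polyBar t.p) (polyBar t.q) '' t.Y) ∧
  GalInvariant (K := K) t.X ∧
  (∑ᶠ P ∈ t.Y, ProjLine.ram d (polyBar t.p) (polyBar t.q) P) = n ∧
  GoodRedPoints S t.X

/-- Membership in `𝐺𝑅¹_d[n](K,S)`: as in `MemGRtilde`, and in addition `f` has simple
good reduction outside `S`. -/
def MemGR (S : Set (NFPlace K)) (d n : ℕ) (t : DynTriple K) : Prop :=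
  MemGRtilde S d n t ∧ SimpleGoodRed S d t.p t.q

/-- Two triples are `PGL₂(R_S)`-equivalent:  `t' = φ⁻¹ ∘ t ∘ φ` for some `φ = M` with
`S`-integral entries and `S`-unit determinant. -/
def TripleEquiv (S : Set (NFPlace K)) (d : ℕ) (t t' : DynTriple K) : Prop :=
  ∃ M : Matrix (Fin 2) (Fin 2) K,
    (∀ i j, SInteger S (M i j)) ∧ SUnit S M.det ∧
    (∀ P, ProjLine.mobius (matBar M) (ProjLine.eval d (polyBar t'.p) (polyBar t'.q) P)
        = ProjLine.eval d (polyBar t.p) (polyBar t.q) (ProjLine.mobius (matBar M) P)) ∧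
    ProjLine.mobius (matBar M) '' t'.Y = t.Y ∧
    ProjLine.mobius (matBar M) '' t'.X = t.X

end

noncomputable section
open Polynomial

/-- Numerator `a·x(x-1)(x-2)⋯(x-d+1)` of the map `f_a` of Proposition 4.1. -/
def fNum (L : Type*) [Field L] (d : ℕ) (a : L) : L[X] :=
  C a * ∏ i ∈ Finset.range d, (X - C ((i : ℕ) : L))

/-- Denominator `(x+1)(x+2)⋯(x+d-1)` of the map `f_a` of Proposition 4.1. -/
def fDen (L : Type*) [Field L] (d : ℕ) : L[X] :=
  ∏ i ∈ Finset.range (d - 1), (X + C ((i + 1 : ℕ) : L))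

/-- The set `X = {0, ±1, ±2, …, ±(d-1)} ∪ {∞}` of `2d` points of Proposition 4.1. -/
def stdSet (L : Type*) [Field L] (d : ℕ) : Set (ProjLine L) :=
  insert (none : ProjLine L)
    ((fun m : ℤ => (some ((m : ℤ) : L) : ProjLine L)) '' Set.Icc (-(d : ℤ) + 1) ((d : ℤ) - 1))

end

/-!
Write `f_a = a·P/Q` with `P = ∏_{0 ≤ m < d} (X - m)` and `Q = ∏_{-d < m < 0} (X - m)`. On `X =
{∞} ∪ {-(d-1), …, d-1}` the map sends the roots of `P` to `0` and the roots of `Q` and `∞` to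
`∞`, each point with ramification index `1`, so the weight of `X` is `2d`. The differences of
distinct points of `X` are, up to sign, integers in `[1, 2d-2]`, and the resultant of `f_a` is
`± a^d ∏ (m - m')` over the roots `m` of `P` and `m'` of `Q`, where again `m - m' ∈ [1, 2d-2]`.
Such integers divide `(2d-2)!`, so they are `S`-units, which gives the good reduction of `X` and
of `f_a`.

An equivalence between `(f_a, X, X)` and a fixed triple `t` is a Möbius map sending three chosen
points of `t.Y` into the finite set `X`. A Möbius map is determined by three values, so there are
finitely many such maps, and each determines `a`: it conjugates the map of `t` into `f_a`, and
`a ↦ f_a` is injective. Hence each class contains finitely many `f_a`, whereas `R_S^×` contains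
the infinitely many powers of `2`.
-/

noncomputable section
open NumberField

def intRootPoly (R : Type*) [CommRing R] (s : Finset ℤ) : R[X] := ∏ m ∈ s, (X - C (m : R))

section IntRootPoly
variable {R : Type*} [CommRing R] (s t : Finset ℤ)

theorem intRootPoly_monic : (intRootPoly R s).Monic :=
  monic_prod_of_monic _ _ fun _ _ => monic_X_sub_C _

theorem natDegree_intRootPoly [Nontrivial R] : (intRootPoly R s).natDegree = s.card := by
  rw [intRootPoly, natDegree_prod_of_monic _ _ fun _ _ => monic_X_sub_C _]
  simp only [natDegree_X_sub_C, Finset.sum_const, smul_eq_mul, mul_one]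

theorem map_intRootPoly {S : Type*} [CommRing S] (f : R →+* S) :
    (intRootPoly R s).map f = intRootPoly S s := by
  simp [intRootPoly, Polynomial.map_prod]

theorem eval_intRootPoly (n : ℤ) :
    (intRootPoly R s).eval (n : R) = ∏ m ∈ s, ((n - m : ℤ) : R) := by
  simp [intRootPoly, eval_prod]

theorem intRootPoly_eq_mul_erase {n : ℤ} (hn : n ∈ s) :
    intRootPoly R s = (X - C (n : R)) * intRootPoly R (s.erase n) :=
  (Finset.mul_prod_erase s _ hn).symm

theorem resultant_intRootPoly [Nontrivial R] {n : ℕ} (hn : (intRootPoly R t).natDegree ≤ n) :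
    (intRootPoly R s).resultant (intRootPoly R t) s.card n =
      ∏ m ∈ s, ∏ m' ∈ t, ((m - m' : ℤ) : R) := by
  have h := resultant_prod_left s (fun m : ℤ => X - C (m : R)) (intRootPoly R t) n
    (by simp only [leadingCoeff_X_sub_C, Finset.prod_const_one]; exact one_ne_zero) hn
  rw [← intRootPoly, natDegree_intRootPoly] at h
  rw [h]
  refine Finset.prod_congr rfl fun m _ => ?_
  rw [natDegree_X_sub_C, resultant_X_sub_C_left (hg := hn), eval_intRootPoly]

variable {L : Type*} [Field L] [CharZero L] {s t}

theorem eval_intRootPoly_eq_zero_iff {n : ℤ} : (intRootPoly L s).eval (n : L) = 0 ↔ n ∈ s := by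
  simp [eval_intRootPoly, Finset.prod_eq_zero_iff, sub_eq_zero]

theorem rootMultiplicity_intRootPoly {n : ℤ} (hn : n ∈ s) :
    rootMultiplicity (n : L) (intRootPoly L s) = 1 := by
  rw [intRootPoly_eq_mul_erase s hn, rootMultiplicity_mul, rootMultiplicity_X_sub_C_self,
    rootMultiplicity_eq_zero]
  · simp [IsRoot, eval_intRootPoly_eq_zero_iff]
  · rw [← intRootPoly_eq_mul_erase s hn]
    exact (intRootPoly_monic s).ne_zero

theorem isCoprime_intRootPoly (h : Disjoint s t) :
    IsCoprime (intRootPoly L s) (intRootPoly L t) :=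
  IsCoprime.prod_left fun _ hm => IsCoprime.prod_right fun _ hm' =>
    isCoprime_X_sub_C_of_isUnit_sub <| isUnit_iff_ne_zero.2 <| sub_ne_zero.2 fun e =>
      Finset.disjoint_left.1 h hm (Int.cast_injective e ▸ hm')

end IntRootPoly

theorem Polynomial.natTrailingDegree_reflect {R : Type*} [Semiring R] {p : R[X]} (hp : p ≠ 0)
    {N : ℕ} (hN : p.natDegree ≤ N) : (p.reflect N).natTrailingDegree = N - p.natDegree := by
  apply le_antisymm
  · apply natTrailingDegree_le_of_ne_zero
    rw [coeff_reflect, revAt_le (Nat.sub_le _ _), Nat.sub_sub_self hN]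
    exact leadingCoeff_ne_zero.2 hp
  · refine le_natTrailingDegree (by rwa [Ne, reflect_eq_zero_iff]) fun m hm => ?_
    rw [coeff_reflect, revAt_le (by omega)]
    exact coeff_eq_zero_of_natDegree_lt (by omega)

namespace ProjLine
open Matrix
variable {L : Type*} [Field L]

section Evaluation
variable {p q : L[X]} {x : L}

theorem evalAt_of_eval_eq_zero (hq : q.eval x = 0) : evalAt p q x = none := if_pos hq

theorem evalAt_of_eval_ne_zero (hq : q.eval x ≠ 0) :
    evalAt p q x = some (p.eval x / q.eval x) :=
  if_neg hq

theorem ramAt_of_eval_eq_zero (hq : q.eval x = 0) : ramAt p q x = rootMultiplicity x q :=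
  if_pos hq

theorem ramAt_of_eval_eq_zero_of_eval_ne_zero (hp : p.eval x = 0) (hq : q.eval x ≠ 0) :
    ramAt p q x = rootMultiplicity x p := by
  rw [ramAt, if_neg hq, hp, C_0, zero_mul, sub_zero, ← count_roots, ← count_roots,
    roots_C_mul _ hq]

theorem eval_reflect_eq_zero_of_natDegree_lt {d : ℕ} (hq : q.natDegree < d) :
    (q.reflect d).eval 0 = 0 := by
  rw [← coeff_zero_eq_eval_zero, coeff_reflect, revAt_zero, coeff_eq_zero_of_natDegree_lt hq]

theorem eval_none_of_natDegree_lt {d : ℕ} (hq : q.natDegree < d) : eval d p q none = none :=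
  evalAt_of_eval_eq_zero (eval_reflect_eq_zero_of_natDegree_lt hq)

theorem ram_none_of_natDegree_lt {d : ℕ} (hq0 : q ≠ 0) (hq : q.natDegree < d) :
    ram d p q none = d - q.natDegree := by
  rw [ram, ramAt_of_eval_eq_zero (eval_reflect_eq_zero_of_natDegree_lt hq),
    rootMultiplicity_eq_natTrailingDegree', natTrailingDegree_reflect hq0 hq.le]

end Evaluation

section Mobius

def toVec : ProjLine L → Fin 2 → L
  | some x => ![x, 1]
  | none => ![1, 0]

def ofVec (w : Fin 2 → L) : ProjLine L := if w 1 = 0 then none else some (w 0 / w 1)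

theorem toVec_ne_zero (P : ProjLine L) : toVec P ≠ 0 := by
  cases P <;> simp [toVec, funext_iff, Fin.forall_fin_two]

theorem ofVec_toVec (P : ProjLine L) : ofVec (toVec P) = P := by
  cases P <;> simp [toVec, ofVec]

theorem ofVec_smul {c : L} (hc : c ≠ 0) (w : Fin 2 → L) : ofVec (c • w) = ofVec w := by
  simp [ofVec, hc, mul_div_mul_left]

theorem exists_smul_toVec_ofVec {w : Fin 2 → L} (hw : w ≠ 0) :
    ∃ c : L, c ≠ 0 ∧ c • toVec (ofVec w) = w := by
  by_cases h : w 1 = 0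
  · have h0 : w 0 ≠ 0 := fun h0 => hw (funext <| Fin.forall_fin_two.2 ⟨h0, h⟩)
    exact ⟨w 0, h0, funext <| Fin.forall_fin_two.2 (by simp [ofVec, toVec, h])⟩
  · exact ⟨w 1, h, funext <| Fin.forall_fin_two.2 (by simp [ofVec, toVec, h, mul_div_cancel₀])⟩

theorem mobius_eq_ofVec (M : Matrix (Fin 2) (Fin 2) L) (P : ProjLine L) :
    mobius M P = ofVec (M *ᵥ toVec P) := by
  cases P <;> simp [mobius, ofVec, toVec, mulVec, dotProduct, Fin.sum_univ_two]

theorem mobius_one (P : ProjLine L) : mobius 1 P = P := by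
  rw [mobius_eq_ofVec, one_mulVec, ofVec_toVec]

theorem mobius_mul (A : Matrix (Fin 2) (Fin 2) L) {B : Matrix (Fin 2) (Fin 2) L}
    (hB : B.det ≠ 0) (P : ProjLine L) : mobius (A * B) P = mobius A (mobius B P) := by
  have hw : B *ᵥ toVec P ≠ 0 := fun h =>
    hB (exists_mulVec_eq_zero_iff.1 ⟨_, toVec_ne_zero P, h⟩)
  obtain ⟨c, hc, hcw⟩ := exists_smul_toVec_ofVec hw
  rw [mobius_eq_ofVec, mobius_eq_ofVec, mobius_eq_ofVec B, ← mulVec_mulVec]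
  conv_lhs => rw [← hcw, mulVec_smul, ofVec_smul hc]

theorem mobius_inv_mobius {A : Matrix (Fin 2) (Fin 2) L} (hA : A.det ≠ 0) (P : ProjLine L) :
    mobius A⁻¹ (mobius A P) = P := by
  rw [← mobius_mul _ hA, nonsing_inv_mul A (isUnit_iff_ne_zero.2 hA), mobius_one]

theorem mobius_surjective {A : Matrix (Fin 2) (Fin 2) L} (hA : A.det ≠ 0) :
    Function.Surjective (mobius A) := fun P =>
  ⟨mobius A⁻¹ P, by
    rw [← mobius_mul _ (by simpa [det_nonsing_inv] using hA),
      mul_nonsing_inv A (isUnit_iff_ne_zero.2 hA), mobius_one]⟩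

theorem mobius_fix_none {A : Matrix (Fin 2) (Fin 2) L} (h : mobius A none = none) :
    A 1 0 = 0 := by
  by_contra h10
  simp [mobius, h10] at h

theorem mobius_fix_some {A : Matrix (Fin 2) (Fin 2) L} {x : L} (h : mobius A (some x) = some x) :
    A 0 0 * x + A 0 1 = x * (A 1 0 * x + A 1 1) := by
  by_cases hx : A 1 0 * x + A 1 1 = 0
  · simp [mobius, hx] at h
  · simp only [mobius, if_neg hx, Option.some.injEq, div_eq_iff hx] at h
    linear_combination h

theorem mobius_eq_id_of_fix_two {A : Matrix (Fin 2) (Fin 2) L} (hA : A.det ≠ 0)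
    (h10 : A 1 0 = 0) {x y : L} (hxy : x ≠ y) (hx : mobius A (some x) = some x)
    (hy : mobius A (some y) = some y) : mobius A = id := by
  have ex := mobius_fix_some hx
  have ey := mobius_fix_some hy
  rw [h10] at ex ey
  have h11 : A 1 1 = A 0 0 :=
    (mul_eq_zero.1 (by linear_combination ey - ex : (A 1 1 - A 0 0) * (x - y) = 0)).elim
      sub_eq_zero.1 fun h => absurd (sub_eq_zero.1 h) hxy
  have h01 : A 0 1 = 0 := by linear_combination ex + x * h11
  have h00 : A 0 0 ≠ 0 := fun h => hA (by simp [det_fin_two, h, h10])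
  funext P
  cases P <;> simp [mobius, h10, h01, h11, h00]

theorem mobius_eq_id_of_fix_three {A : Matrix (Fin 2) (Fin 2) L} (hA : A.det ≠ 0)
    {P₁ P₂ P₃ : ProjLine L} (h12 : P₁ ≠ P₂) (h13 : P₁ ≠ P₃) (h23 : P₂ ≠ P₃)
    (f₁ : mobius A P₁ = P₁) (f₂ : mobius A P₂ = P₂) (f₃ : mobius A P₃ = P₃) :
    mobius A = id := by
  rcases P₁ with _ | x₁ <;> rcases P₂ with _ | x₂ <;> rcases P₃ with _ | x₃ <;>
    simp only [ne_eq, reduceCtorEq, not_true_eq_false, not_false_eq_true, Option.some.injEq]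
      at h12 h13 h23
  · exact mobius_eq_id_of_fix_two hA (mobius_fix_none f₁) h23 f₂ f₃
  · exact mobius_eq_id_of_fix_two hA (mobius_fix_none f₂) h13 f₁ f₃
  · exact mobius_eq_id_of_fix_two hA (mobius_fix_none f₃) h12 f₁ f₂
  · -- the finite fixed points are roots of `A 1 0 * x ^ 2 + (A 1 1 - A 0 0) * x - A 0 1`
    have e₁ := mobius_fix_some f₁
    have e₂ := mobius_fix_some f₂
    have e₃ := mobius_fix_some f₃
    have s₁₂ : A 0 0 - A 1 0 * (x₁ + x₂) - A 1 1 = 0 :=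
      (mul_eq_zero.1 (by linear_combination e₁ - e₂ :
        (A 0 0 - A 1 0 * (x₁ + x₂) - A 1 1) * (x₁ - x₂) = 0)).resolve_right (sub_ne_zero.2 h12)
    have s₁₃ : A 0 0 - A 1 0 * (x₁ + x₃) - A 1 1 = 0 :=
      (mul_eq_zero.1 (by linear_combination e₁ - e₃ :
        (A 0 0 - A 1 0 * (x₁ + x₃) - A 1 1) * (x₁ - x₃) = 0)).resolve_right (sub_ne_zero.2 h13)
    have h10 : A 1 0 = 0 :=
      (mul_eq_zero.1 (by linear_combination s₁₂ - s₁₃ : A 1 0 * (x₃ - x₂) = 0)).resolve_right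
        (sub_ne_zero.2 (Ne.symm h23))
    exact mobius_eq_id_of_fix_two hA h10 h12 f₁ f₂

theorem mobius_eq_of_eq_at_three {A B : Matrix (Fin 2) (Fin 2) L} (hA : A.det ≠ 0)
    (hB : B.det ≠ 0) {P₁ P₂ P₃ : ProjLine L} (h12 : P₁ ≠ P₂) (h13 : P₁ ≠ P₃) (h23 : P₂ ≠ P₃)
    (e₁ : mobius A P₁ = mobius B P₁) (e₂ : mobius A P₂ = mobius B P₂)
    (e₃ : mobius A P₃ = mobius B P₃) : mobius A = mobius B := by
  have hC : (B⁻¹ * A).det ≠ 0 := by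
    simpa [det_mul, det_nonsing_inv] using And.intro hB hA
  have hfix : ∀ {P}, mobius A P = mobius B P → mobius (B⁻¹ * A) P = P := fun e => by
    rw [mobius_mul _ hA, e, mobius_inv_mobius hB]
  have hid := mobius_eq_id_of_fix_three hC h12 h13 h23 (hfix e₁) (hfix e₂) (hfix e₃)
  funext P
  calc mobius A P = mobius (B * (B⁻¹ * A)) P := by
        rw [← mul_assoc, mul_nonsing_inv B (isUnit_iff_ne_zero.2 hB), one_mul]
    _ = mobius B P := by rw [mobius_mul _ hC, hid, id]

theorem finite_setOf_mobius_mapsTo {P₁ P₂ P₃ : ProjLine L} (h12 : P₁ ≠ P₂) (h13 : P₁ ≠ P₃)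
    (h23 : P₂ ≠ P₃) {X : Set (ProjLine L)} (hX : X.Finite) :
    {g : ProjLine L → ProjLine L | (∃ M : Matrix (Fin 2) (Fin 2) L, M.det ≠ 0 ∧ mobius M = g) ∧
      g P₁ ∈ X ∧ g P₂ ∈ X ∧ g P₃ ∈ X}.Finite := by
  refine Set.Finite.of_finite_image (f := fun g => (g P₁, g P₂, g P₃))
    ((hX.prod (hX.prod hX)).subset ?_) ?_
  · rintro _ ⟨g, ⟨-, h₁, h₂, h₃⟩, rfl⟩
    exact ⟨h₁, h₂, h₃⟩
  · rintro _ ⟨⟨A, hA, rfl⟩, -⟩ _ ⟨⟨B, hB, rfl⟩, -⟩ h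
    simp only [Prod.mk.injEq] at h
    exact mobius_eq_of_eq_at_three hA hB h12 h13 h23 h.1 h.2.1 h.2.2

end Mobius

section Resultant

def blockRev (e d : ℕ) : Equiv.Perm (Fin (e + d)) :=
  finSumFinEquiv.symm.trans ((Equiv.sumCongr Fin.revPerm Fin.revPerm).trans finSumFinEquiv)

/-- `sylvester` puts the coefficients of `p` and `q` in rows, in decreasing degree;
`Polynomial.sylvester` puts them in columns, in increasing degree. -/
theorem sylvester_eq_transpose_submatrix (d e : ℕ) (p q : L[X]) :
    sylvester d e p q =
      ((Polynomial.sylvester q p e d).submatrix Fin.revPerm (blockRev e d))ᵀ := by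
  ext i j
  have hj := j.isLt
  induction i using Fin.addCases with
  | left k =>
    have hk := k.isLt
    simp only [sylvester, Polynomial.sylvester, blockRev, of_apply, transpose_apply,
      submatrix_apply, Equiv.trans_apply, finSumFinEquiv_symm_apply_castAdd, Equiv.sumCongr_apply,
      Sum.map_inl, finSumFinEquiv_apply_left, Fin.addCases_left, Fin.revPerm_apply, Fin.val_rev,
      Fin.val_castAdd, Set.mem_Icc, k.isLt, if_true]
    split_ifs <;> first | rfl | omega | (congr 1; omega)
  | right k =>
    have hk := k.isLt
    simp only [sylvester, Polynomial.sylvester, blockRev, of_apply, transpose_apply,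
      submatrix_apply, Equiv.trans_apply, finSumFinEquiv_symm_apply_natAdd, Equiv.sumCongr_apply,
      Sum.map_inr, finSumFinEquiv_apply_right, Fin.addCases_right, Fin.revPerm_apply, Fin.val_rev,
      Fin.val_natAdd, Set.mem_Icc]
    rw [if_neg (by omega)]
    split_ifs <;> first | rfl | omega | (congr 1; omega)

theorem resultant_eq_sign_mul (d e : ℕ) (p q : L[X]) :
    ∃ ε : ℤˣ, resultant d e p q = ε * p.resultant q d e := by
  refine ⟨Equiv.Perm.sign (Fin.revPerm (n := e + d)) * Equiv.Perm.sign (blockRev e d) *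
    (-1) ^ (d * e), ?_⟩
  have hsplit : (q.sylvester p e d).submatrix Fin.revPerm (blockRev e d) =
      ((q.sylvester p e d).submatrix Fin.revPerm id).submatrix id (blockRev e d) := rfl
  rw [resultant, sylvester_eq_transpose_submatrix, det_transpose, hsplit, det_permute',
    det_permute, Polynomial.resultant_comm]
  push_cast
  rcases neg_one_pow_eq_or L (d * e) with h | h <;> rw [Polynomial.resultant, h] <;> ring

end Resultant

theorem red_injOn_insert_none {O : ValuationSubring L} {s : Set L} (hs : ∀ x ∈ s, x ∈ O)
    (hsub : ∀ x ∈ s, ∀ y ∈ s, x ≠ y → O.valuation (x - y) = 1) :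
    Set.InjOn (red O) (insert none (some '' s)) := by
  rintro _ (rfl | ⟨x, hx, rfl⟩) _ (rfl | ⟨y, hy, rfl⟩) h
  · rfl
  · simp [red, hs y hy] at h
  · simp [red, hs x hx] at h
  · by_contra hxy
    rw [red, red, dif_pos (hs x hx), dif_pos (hs y hy), Option.some_inj, ← sub_eq_zero,
      ← map_sub, IsLocalRing.residue_eq_zero_iff, ValuationSubring.valuation_lt_one_iff] at h
    exact h.ne (hsub x hx y hy fun e => hxy (e ▸ rfl))

end ProjLine

section RationalMap
open ProjLine
variable {L : Type*} [Field L]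

theorem fNum_eq (d : ℕ) (a : L) : fNum L d a = C a * intRootPoly L (Finset.Ico 0 d) := by
  rw [fNum, intRootPoly]
  congr 1
  refine Finset.prod_nbij' (fun i => (i : ℤ)) Int.toNat ?_ ?_ ?_ ?_ ?_ <;> intros <;> simp_all

theorem fDen_eq (d : ℕ) : fDen L d = intRootPoly L (Finset.Ioo (-d) 0) := by
  rw [fDen, intRootPoly]
  refine Finset.prod_nbij' (fun i => -(i + 1 : ℤ)) (fun m => (-m - 1).toNat) ?_ ?_ ?_ ?_ ?_ <;>
    intros <;> simp_all <;> first | omega | ring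

variable (L) in
theorem stdSet_eq_coe (d : ℕ) :
    stdSet L d = ↑(insert none
      ((Finset.Icc (-(d : ℤ) + 1) (d - 1)).image fun m : ℤ => (some (m : L) : ProjLine L))) := by
  rw [stdSet, Finset.coe_insert, Finset.coe_image, Finset.coe_Icc]

variable (L) in
theorem stdSet_finite (d : ℕ) : (stdSet L d).Finite :=
  stdSet_eq_coe L d ▸ Finset.finite_toSet _

variable (L) in
theorem none_mem_stdSet (d : ℕ) : none ∈ stdSet L d := Set.mem_insert _ _

theorem intCast_mem_stdSet {d : ℕ} {m : ℤ} (h₁ : -(d : ℤ) + 1 ≤ m) (h₂ : m ≤ d - 1) :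
    some (m : L) ∈ stdSet L d :=
  Set.mem_insert_of_mem _ ⟨m, ⟨h₁, h₂⟩, rfl⟩

theorem galInvariant_stdSet {K : Type*} [Field K] [Algebra K L] (d : ℕ) :
    GalInvariant (K := K) (stdSet L d) := by
  rintro σ _ (rfl | ⟨m, hm, rfl⟩)
  · exact none_mem_stdSet L d
  · rw [Option.map_some, map_intCast]
    exact intCast_mem_stdSet hm.1 hm.2

variable {d : ℕ} {a : L}

theorem natDegree_fNum (ha : a ≠ 0) : (fNum L d a).natDegree = d := by
  rw [fNum_eq, natDegree_C_mul ha, natDegree_intRootPoly, Int.card_Ico, sub_zero,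
    Int.toNat_natCast]

theorem natDegree_fDen : (fDen L d).natDegree = d - 1 := by
  rw [fDen_eq, natDegree_intRootPoly, Int.card_Ioo]
  omega

theorem eval_fNum_fDen_none (hd : 1 ≤ d) :
    ProjLine.eval d (fNum L d a) (fDen L d) none = none :=
  eval_none_of_natDegree_lt (by rw [natDegree_fDen]; omega)

theorem ram_fNum_fDen_none (hd : 1 ≤ d) : ram d (fNum L d a) (fDen L d) none = 1 := by
  rw [ram_none_of_natDegree_lt (fDen_eq (L := L) d ▸ (intRootPoly_monic _).ne_zero)
    (by rw [natDegree_fDen]; omega), natDegree_fDen]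
  omega

theorem resultant_fNum_fDen :
    ∃ ε : ℤˣ, ProjLine.resultant d d (fNum L d a) (fDen L d) =
      ε * a ^ d * ∏ m ∈ Finset.Ico 0 (d : ℤ), ∏ m' ∈ Finset.Ioo (-d : ℤ) 0, ((m - m' : ℤ) : L) := by
  obtain ⟨ε, hε⟩ := ProjLine.resultant_eq_sign_mul d d (fNum L d a) (fDen L d)
  refine ⟨ε, ?_⟩
  have h := resultant_intRootPoly (R := L) (Finset.Ico 0 (d : ℤ)) (Finset.Ioo (-d : ℤ) 0)
    (n := d) (by rw [← fDen_eq, natDegree_fDen]; omega)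
  rw [Int.card_Ico, sub_zero, Int.toNat_natCast] at h
  rw [hε, fNum_eq, resultant_C_mul_left, fDen_eq, h, mul_assoc]

variable [CharZero L]

theorem eval_fNum_intCast_eq_zero {m : ℤ} (h₀ : 0 ≤ m) (h₁ : m < d) :
    (fNum L d a).eval (m : L) = 0 := by
  rw [fNum_eq, eval_mul, eval_intRootPoly_eq_zero_iff.2 (Finset.mem_Ico.2 ⟨h₀, h₁⟩), mul_zero]

theorem eval_fDen_intCast_eq_zero_iff {m : ℤ} :
    (fDen L d).eval (m : L) = 0 ↔ -d < m ∧ m < 0 := by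
  rw [fDen_eq, eval_intRootPoly_eq_zero_iff, Finset.mem_Ioo]

theorem isRatMapOfDeg_fNum_fDen (ha : a ≠ 0) : IsRatMapOfDeg d (fNum L d a) (fDen L d) := by
  refine ⟨?_, (natDegree_fNum ha).le, natDegree_fDen.trans_le (Nat.sub_le d 1),
    Or.inl (natDegree_fNum ha)⟩
  rw [fNum_eq, fDen_eq, isCoprime_mul_unit_left_left (isUnit_C.2 (isUnit_iff_ne_zero.2 ha))]
  exact isCoprime_intRootPoly (Finset.disjoint_left.2 fun m h₁ h₂ => by
    simp only [Finset.mem_Ico, Finset.mem_Ioo] at h₁ h₂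
    omega)

theorem eval_fNum_fDen_intCast {m : ℤ} (hm : ¬ (-d < m ∧ m < 0)) :
    ProjLine.eval d (fNum L d a) (fDen L d) (some m) =
      some ((fNum L d a).eval (m : L) / (fDen L d).eval (m : L)) :=
  evalAt_of_eval_ne_zero (eval_fDen_intCast_eq_zero_iff.not.2 hm)

theorem mapsTo_eval_fNum_fDen_stdSet (hd : 1 ≤ d) :
    Set.MapsTo (ProjLine.eval d (fNum L d a) (fDen L d)) (stdSet L d) (stdSet L d) := by
  rintro _ (rfl | ⟨m, ⟨h₁, h₂⟩, rfl⟩)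
  · rw [eval_fNum_fDen_none hd]
    exact none_mem_stdSet L d
  by_cases hm : m < 0
  · rw [ProjLine.eval, evalAt_of_eval_eq_zero (eval_fDen_intCast_eq_zero_iff.2 ⟨by omega, hm⟩)]
    exact none_mem_stdSet L d
  · rw [eval_fNum_fDen_intCast fun h => hm h.2, eval_fNum_intCast_eq_zero (by omega) (by omega),
      zero_div]
    exact_mod_cast intCast_mem_stdSet (m := 0) (by omega) (by omega)

theorem ram_fNum_fDen_intCast (ha : a ≠ 0) {m : ℤ} (h₁ : -d < m) (h₂ : m < d) :
    ram d (fNum L d a) (fDen L d) (some m) = 1 := by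
  by_cases hm : m < 0
  · rw [ram, ramAt_of_eval_eq_zero (eval_fDen_intCast_eq_zero_iff.2 ⟨h₁, hm⟩), fDen_eq,
      rootMultiplicity_intRootPoly (by simp [h₁, hm])]
  · rw [ram, ramAt_of_eval_eq_zero_of_eval_ne_zero (eval_fNum_intCast_eq_zero (by omega) h₂)
      (eval_fDen_intCast_eq_zero_iff.not.2 (by omega)), fNum_eq, ← count_roots, roots_C_mul _ ha,
      count_roots, rootMultiplicity_intRootPoly (by simp; omega)]

theorem finsum_ram_fNum_fDen_stdSet (ha : a ≠ 0) (hd : 1 ≤ d) :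
    ∑ᶠ P ∈ stdSet L d, ram d (fNum L d a) (fDen L d) P = 2 * d := by
  rw [stdSet_eq_coe, finsum_mem_coe_finset, Finset.sum_insert (by simp),
    Finset.sum_image (fun _ _ _ _ h => Int.cast_injective (Option.some_injective _ h)),
    Finset.sum_congr rfl fun m hm => ram_fNum_fDen_intCast ha (by simp at hm; omega)
      (by simp at hm; omega), ram_fNum_fDen_none hd, Finset.sum_const, Int.card_Icc, smul_eq_mul,
    mul_one]
  omega

theorem eval_fNum_fDen_injective :
    Function.Injective fun b : L => ProjLine.eval d (fNum L d b) (fDen L d) := by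
  intro b₁ b₂ h
  have hQ : (fDen L d).eval ((d : ℤ) : L) ≠ 0 :=
    eval_fDen_intCast_eq_zero_iff.not.2 (by omega)
  have hP : (intRootPoly L (Finset.Ico 0 (d : ℤ))).eval ((d : ℤ) : L) ≠ 0 :=
    eval_intRootPoly_eq_zero_iff.not.2 (by simp)
  have hd := congrFun h (some ((d : ℤ) : L))
  simp only at hd
  rwa [eval_fNum_fDen_intCast (by omega), eval_fNum_fDen_intCast (by omega), Option.some_inj,
    div_left_inj' hQ, fNum_eq, fNum_eq, eval_mul, eval_mul, eval_C, eval_C,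
    mul_left_inj' hP] at hd

end RationalMap

section BaseChange
variable {K : Type*} [Field K]

local notation "Kbar" => AlgebraicClosure K

theorem polyBar_fNum (d : ℕ) (a : K) :
    polyBar (fNum K d a) = fNum Kbar d (algebraMap K Kbar a) := by
  rw [polyBar, fNum_eq, fNum_eq, Polynomial.map_mul, map_C, map_intRootPoly]

theorem polyBar_fDen (d : ℕ) : polyBar (fDen K d) = fDen Kbar d := by
  rw [polyBar, fDen_eq, fDen_eq, map_intRootPoly]

theorem det_matBar_ne_zero {M : Matrix (Fin 2) (Fin 2) K} (h : M.det ≠ 0) :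
    (matBar M).det ≠ 0 := by
  rw [matBar, ← RingHom.mapMatrix_apply, ← RingHom.map_det]
  exact (_root_.map_ne_zero _).2 h

end BaseChange

section SUnits
variable {K : Type*} [Field K] [NumberField K] {S : Set (NFPlace K)}

theorem sInteger_intCast (m : ℤ) : SInteger S (m : K) := fun v _ => by
  rw [← map_intCast (algebraMap (𝓞 K) K)]
  exact v.valuation_le_one _

theorem SInteger.mul {x y : K} (hx : SInteger S x) (hy : SInteger S y) : SInteger S (x * y) :=
  fun v hv => by rw [map_mul]; exact mul_le_one' (hx v hv) (hy v hv)

theorem SUnit.sInteger {x : K} (hx : SUnit S x) : SInteger S x := fun v hv => (hx.2 v hv).le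

theorem sInteger_coeff_intRootPoly (s : Finset ℤ) (n : ℕ) :
    SInteger S ((intRootPoly K s).coeff n) := by
  rw [← map_intRootPoly s (Int.castRingHom K), coeff_map]
  exact sInteger_intCast _

variable (S) in
def sUnits : Submonoid K where
  carrier := {x | SUnit S x}
  mul_mem' hx hy :=
    ⟨mul_ne_zero hx.1 hy.1, fun v hv => by rw [map_mul, hx.2 v hv, hy.2 v hv, one_mul]⟩
  one_mem' := ⟨one_ne_zero, fun _ _ => map_one _⟩

theorem mem_sUnits {x : K} : x ∈ sUnits S ↔ SUnit S x := Iff.rfl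

theorem sUnit_intCast_of_dvd {m n : ℤ} (hn : SUnit S (n : K)) (hmn : m ∣ n) :
    SUnit S (m : K) := by
  obtain ⟨c, rfl⟩ := hmn
  refine ⟨fun h => hn.1 (by rw [Int.cast_mul, h, zero_mul]), fun v hv =>
    le_antisymm (sInteger_intCast m v hv) ?_⟩
  calc 1 = v.valuation K (m : K) * v.valuation K (c : K) := by
        rw [← map_mul, ← Int.cast_mul, hn.2 v hv]
    _ ≤ v.valuation K (m : K) := mul_le_of_le_one_right' (sInteger_intCast c v hv)

theorem sUnit_factorial {N : ℕ} (hS : S = {v | v.valuation K (N.factorial : K) ≠ 1}) :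
    SUnit S (N.factorial : K) :=
  ⟨Nat.cast_ne_zero.2 N.factorial_ne_zero, fun v hv => by simpa [hS] using hv⟩

theorem sUnit_intCast_of_natAbs_le {N : ℕ} (hN : SUnit S (N.factorial : K)) {m : ℤ}
    (hm : m ≠ 0) (hmN : m.natAbs ≤ N) : SUnit S (m : K) :=
  sUnit_intCast_of_dvd (n := N.factorial) (by exact_mod_cast hN)
    (Int.natAbs_dvd.1 (Int.natCast_dvd_natCast.2 (Nat.dvd_factorial (Int.natAbs_pos.2 hm) hmN)))

theorem sUnit_units_intCast (ε : ℤˣ) : SUnit S ((ε : ℤ) : K) := by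
  rcases Int.units_eq_one_or ε with rfl | rfl <;> simp [SUnit]

theorem infinite_setOf_sUnit (h2 : SUnit S (2 : K)) : {x : K | SUnit S x}.Infinite :=
  Set.infinite_of_injective_forall_mem (f := fun n : ℕ => (2 : K) ^ n)
    (fun m n h => Nat.pow_right_injective le_rfl <| Nat.cast_injective (R := K) <| by simpa using h)
    fun n => pow_mem (S := sUnits S) h2 n

end SUnits

section GoodReduction
variable {K : Type*} [Field K] [NumberField K] {S : Set (NFPlace K)} {d : ℕ}

theorem LiesOver.valuation_algebraMap_eq_one {Kb : Type*} [Field Kb] [Algebra K Kb]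
    {O : ValuationSubring Kb} {v : NFPlace K} (hO : LiesOver O v) {x : K}
    (hx : v.valuation K x = 1) : O.valuation (algebraMap K Kb x) = 1 := by
  have hinv : O.valuation (algebraMap K Kb x)⁻¹ ≤ 1 := by
    rw [← map_inv₀, O.valuation_le_one_iff]
    exact (hO _).2 (by rw [map_inv₀, hx, inv_one])
  have hx0 : algebraMap K Kb x ≠ 0 := by
    rw [_root_.map_ne_zero]
    rintro rfl
    simp at hx
  refine le_antisymm ((O.valuation_le_one_iff _).2 ((hO x).2 hx.le)) ?_
  rwa [map_inv₀, inv_le_one₀ ((Valuation.pos_iff _).2 hx0)] at hinv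

theorem goodRedPoints_stdSet {Kb : Type*} [Field Kb] [Algebra K Kb]
    (hN : SUnit S ((2 * d - 2).factorial : K)) : GoodRedPoints S (stdSet Kb d) := by
  intro v hv O hO
  rw [stdSet, ← Set.image_image some]
  refine ProjLine.red_injOn_insert_none ?_ ?_
  · rintro _ ⟨m, -, rfl⟩
    rw [← map_intCast (algebraMap K Kb)]
    exact (hO m).2 (sInteger_intCast m v hv)
  · rintro _ ⟨m, hm, rfl⟩ _ ⟨n, hn, rfl⟩ hmn
    have hmn' : m - n ≠ 0 := sub_ne_zero.2 fun h => hmn (h ▸ rfl)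
    rw [← Int.cast_sub, ← map_intCast (algebraMap K Kb)]
    refine hO.valuation_algebraMap_eq_one ((sUnit_intCast_of_natAbs_le hN hmn' ?_).2 v hv)
    simp only [Set.mem_Icc] at hm hn
    omega

theorem sUnit_resultant_fNum_fDen (hN : SUnit S ((2 * d - 2).factorial : K)) {a : K}
    (ha : SUnit S a) : SUnit S (ProjLine.resultant d d (fNum K d a) (fDen K d)) := by
  obtain ⟨ε, hε⟩ := resultant_fNum_fDen (d := d) (a := a)
  rw [hε, ← mem_sUnits]
  refine mul_mem (mul_mem (sUnit_units_intCast ε) (pow_mem ha d)) <|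
    Submonoid.prod_mem _ fun m hm => Submonoid.prod_mem _ fun m' hm' => ?_
  simp only [Finset.mem_Ico, Finset.mem_Ioo] at hm hm'
  exact sUnit_intCast_of_natAbs_le hN (by omega) (by omega)

theorem simpleGoodRed_fNum_fDen (hN : SUnit S ((2 * d - 2).factorial : K)) {a : K}
    (ha : SUnit S a) : SimpleGoodRed S d (fNum K d a) (fDen K d) :=
  ⟨1, fNum K d a, fDen K d, by simp, isRatMapOfDeg_fNum_fDen ha.1,
    fun n => by rw [fNum_eq, coeff_C_mul]; exact ha.sInteger.mul (sInteger_coeff_intRootPoly _ n),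
    fun n => by rw [fDen_eq]; exact sInteger_coeff_intRootPoly _ n,
    sUnit_resultant_fNum_fDen hN ha, fun P => by simp only [ProjLine.mobius_one]⟩

end GoodReduction

section Triples
variable {K : Type*} [Field K] [NumberField K] {S : Set (NFPlace K)} {d : ℕ}

local notation "Kbar" => AlgebraicClosure K

variable (K) in
def fTriple (d : ℕ) (a : K) : DynTriple K :=
  ⟨fNum K d a, fDen K d, stdSet Kbar d, stdSet Kbar d⟩

theorem memGR_fTriple (hd : 1 ≤ d) (hN : SUnit S ((2 * d - 2).factorial : K)) {a : K}
    (ha : SUnit S a) : MemGR S d (2 * d) (fTriple K d a) := by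
  refine ⟨⟨isRatMapOfDeg_fNum_fDen ha.1, stdSet_finite _ d, ?_, galInvariant_stdSet d, ?_,
    goodRedPoints_stdSet hN⟩, simpleGoodRed_fNum_fDen hN ha⟩ <;>
    dsimp only [fTriple] <;> rw [polyBar_fNum, polyBar_fDen]
  · rw [Set.union_eq_self_of_subset_right (mapsTo_eval_fNum_fDen_stdSet hd).image_subset]
  · exact finsum_ram_fNum_fDen_stdSet ((_root_.map_ne_zero _).2 ha.1) hd

theorem finite_setOf_tripleEquiv_fTriple (hd : 2 ≤ d) (t : DynTriple K) :
    {a : K | TripleEquiv S d (fTriple K d a) t}.Finite := by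
  rcases Set.eq_empty_or_nonempty {a : K | TripleEquiv S d (fTriple K d a) t} with
    h | ⟨a₀, M₀, -, -, -, hY₀, -⟩
  · rw [h]
    exact Set.finite_empty
  have hmem : ∀ {P}, P ∈ stdSet Kbar d → ∃ y ∈ t.Y, ProjLine.mobius (matBar M₀) y = P :=
    fun hP => (Set.ext_iff.1 hY₀ _).2 hP
  obtain ⟨y₁, hy₁, e₁⟩ := hmem (none_mem_stdSet _ d)
  obtain ⟨y₂, hy₂, e₂⟩ := hmem (intCast_mem_stdSet (m := 0) (by omega) (by omega))
  obtain ⟨y₃, hy₃, e₃⟩ := hmem (intCast_mem_stdSet (m := 1) (by omega) (by omega))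
  have h12 : y₁ ≠ y₂ := by rintro rfl; simp [e₁] at e₂
  have h13 : y₁ ≠ y₃ := by rintro rfl; simp [e₁] at e₃
  have h23 : y₂ ≠ y₃ := by rintro rfl; simp [e₂] at e₃
  refine ((ProjLine.finite_setOf_mobius_mapsTo h12 h13 h23 (stdSet_finite _ d)).biUnion
    (t := fun g => {a : K | ∀ P, g (ProjLine.eval d (polyBar t.p) (polyBar t.q) P) =
      ProjLine.eval d (polyBar (fNum K d a)) (polyBar (fDen K d)) (g P)}) fun g hg => ?_).subset ?_
  · obtain ⟨⟨M, hM, rfl⟩, -⟩ := hg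
    refine Set.Subsingleton.finite fun a ha b hb => (algebraMap K Kbar).injective ?_
    refine eval_fNum_fDen_injective (d := d) (funext fun P => ?_)
    obtain ⟨Q, rfl⟩ := ProjLine.mobius_surjective hM P
    simp only [← polyBar_fNum, ← polyBar_fDen]
    exact (ha Q).symm.trans (hb Q)
  · rintro a ⟨M, -, hdet, hcomm, hY, -⟩
    have hg : ∀ {y}, y ∈ t.Y → ProjLine.mobius (matBar M) y ∈ stdSet Kbar d :=
      fun hy => (Set.ext_iff.1 hY _).1 (Set.mem_image_of_mem _ hy)
    exact Set.mem_biUnion ⟨⟨matBar M, det_matBar_ne_zero hdet.1, rfl⟩, hg hy₁, hg hy₂, hg hy₃⟩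
      hcomm

end Triples

/-- **Proposition 4.1(c).**  Let `d ≥ 2` and let `S` be the set of primes of `K`
dividing `(2d-2)!`.  The triples `(f_a, X, X)` for `a ∈ R_S^×` all lie in
`GR¹_d[2d](K,S)` and represent infinitely many distinct `PGL₂(R_S)`-equivalence
classes; in particular `GR¹_d[2d](K,S)/PGL₂(R_S)` is infinite. -/
theorem GR_weight_two_d_infinite
    (K : Type*) [Field K] [NumberField K]
    (d : ℕ) (hd : 2 ≤ d)
    (S : Set (NFPlace K))
    (hS : S = {v : NFPlace K | v.valuation K ((Nat.factorial (2 * d - 2) : K)) ≠ 1}) :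
    (∀ a : K, SUnit S a →
      MemGR S d (2 * d)
        ⟨fNum K d a, fDen K d,
          stdSet (AlgebraicClosure K) d, stdSet (AlgebraicClosure K) d⟩) ∧
    ¬ ∃ T : Set (DynTriple K), T.Finite ∧
        ∀ a : K, SUnit S a →
          ∃ t' ∈ T, TripleEquiv S d
            ⟨fNum K d a, fDen K d,
              stdSet (AlgebraicClosure K) d, stdSet (AlgebraicClosure K) d⟩ t' := by
  have hN : SUnit S ((2 * d - 2).factorial : K) := sUnit_factorial hS
  refine ⟨fun a ha => memGR_fTriple (by omega) hN ha, ?_⟩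
  rintro ⟨T, hT, hcover⟩
  have h2 : SUnit S (2 : K) := by
    exact_mod_cast sUnit_intCast_of_natAbs_le hN (m := 2) two_ne_zero (by omega)
  refine infinite_setOf_sUnit h2 ((hT.biUnion fun t _ =>
    finite_setOf_tripleEquiv_fTriple (S := S) hd t).subset fun a ha => ?_)
  obtain ⟨t, ht, hat⟩ := hcover a ha
  exact Set.mem_biUnion ht hat

end
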